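/- arXiv:1811.00880 — 3 statements merged into one kernel-verified Lean document; each statement's English description precedes it below -/
import Mathlib

section
/- Let σ ∈ L^∞(ℝ³) with supp σ ⊆ D, D ⊂ ℝ³ bounded, and x̂ ∈ S². Then for all K > 0, (1/K²)·∫_K^{2K} ∫_K^{2K} |σ²‾^(( k₁ − k₂) x̂)|² dk₁ dk₂ ≤ C·K^{−1/2}, where σ²‾^ denotes the Fourier transform of σ² and C is independent of K and x̂. -/
open MeasureTheory Real
open scoped RealInnerProductSpace

/-!
Let `g(s) = ∫ e^{-i s x̂·y} σ²(y) dy` be the Fourier transform of `σ²` along the line `ℝ x̂`.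
Since `k₁ - k₂` ranges over `[-K, K]`, the double average is at most `K⁻¹ ∫_{-K}^{K} |g|²`.
Expanding `|g(s)|²` as an integral over `D × D` and integrating in `s` first produces the kernel
`∫_{-K}^{K} e^{-i s (x̂·y - x̂·z)} ds`, which is at most `2K` everywhere and at most `2/ε` off the
slab `E_ε = {|x̂·y - x̂·z| < ε}`. The slab has measure `O(ε)` in `D × D`, so
`∫_{-K}^{K} |g|² ≲ K ε + 1/ε`, and `ε = K^{-1/2}` balances the two terms.
-/

/-- Fourier transform of `σ²` with normalization `(2π)^{-3/2}`. -/
noncomputable def ftSigmaSq (σ : EuclideanSpace ℝ (Fin 3) → ℝ)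
    (ξ : EuclideanSpace ℝ (Fin 3)) : ℂ :=
  (((2 * π : ℝ) ^ (-(3 : ℝ)/2) : ℝ) : ℂ) * ∫ y, Complex.exp (-Complex.I * (⟪ξ, y⟫ : ℝ)) * ((σ y) ^ 2 : ℝ)

theorem norm_exp_neg_I_mul_ofReal (r : ℝ) : ‖Complex.exp (-Complex.I * (r : ℂ))‖ = 1 := by
  rw [show -Complex.I * (r : ℂ) = ((-r : ℝ) : ℂ) * Complex.I by push_cast; ring]
  exact Complex.norm_exp_ofReal_mul_I _

/-- Equal to `2 sin (K t) / t` for `t ≠ 0`. -/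
noncomputable def oscillatoryIntegral (K t : ℝ) : ℂ :=
  ∫ k in (-K)..K, Complex.exp (-Complex.I * ((k * t : ℝ) : ℂ))

theorem norm_oscillatoryIntegral_le_two_mul {K : ℝ} (hK : 0 ≤ K) (t : ℝ) :
    ‖oscillatoryIntegral K t‖ ≤ 2 * K := by
  refine (intervalIntegral.norm_integral_le_of_norm_le_const (C := 1) fun k _ =>
    (norm_exp_neg_I_mul_ofReal _).le).trans_eq ?_
  rw [abs_of_nonneg (by linarith)]
  ring

theorem norm_oscillatoryIntegral_le_two_div (K : ℝ) {t : ℝ} (ht : t ≠ 0) :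
    ‖oscillatoryIntegral K t‖ ≤ 2 / |t| := by
  have hc : -Complex.I * (t : ℂ) ≠ 0 := by simp [ht]
  have hunit : ∀ k : ℝ, ‖Complex.exp (-Complex.I * t * k)‖ = 1 := fun k => by
    rw [mul_assoc, ← Complex.ofReal_mul, mul_comm t k, norm_exp_neg_I_mul_ofReal]
  have hprim : oscillatoryIntegral K t
      = (Complex.exp (-Complex.I * t * K) - Complex.exp (-Complex.I * t * (-K : ℝ))) /
          (-Complex.I * t) := by
    rw [← integral_exp_mul_complex hc, oscillatoryIntegral]
    congr 1 with k
    push_cast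
    ring_nf
  have hnum := norm_sub_le (Complex.exp (-Complex.I * t * K))
    (Complex.exp (-Complex.I * t * (-K : ℝ)))
  rw [hunit, hunit] at hnum
  rw [hprim, norm_div, show ‖-Complex.I * (t : ℂ)‖ = |t| by simp]
  gcongr
  linarith

section FourierAlong

variable {α : Type*} [MeasurableSpace α] {μ : Measure α} {φ f : α → ℝ}

/-- The Fourier transform of the push-forward of `f • μ` under `φ`; for `φ = ⟪x̂, ·⟫` it is the
Fourier transform of `f` restricted to the line `ℝ x̂`. -/
noncomputable def fourierAlong (μ : Measure α) (φ f : α → ℝ) (k : ℝ) : ℂ :=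
  ∫ y, Complex.exp (-Complex.I * ((k * φ y : ℝ) : ℂ)) * (f y : ℂ) ∂μ

theorem continuous_fourierAlong (hφ : Measurable φ) (hf : Integrable f μ) :
    Continuous (fourierAlong μ φ f) := by
  refine continuous_of_dominated (bound := fun y => |f y|) (fun k => ?_) (fun k => ?_)
    hf.abs (ae_of_all _ fun y => by fun_prop)
  · exact (Measurable.aestronglyMeasurable (by fun_prop)).mul
      (Complex.continuous_ofReal.comp_aestronglyMeasurable hf.aestronglyMeasurable)
  · exact ae_of_all _ fun y => by
      rw [norm_mul, norm_exp_neg_I_mul_ofReal, one_mul, Complex.norm_real, Real.norm_eq_abs]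

theorem fourierAlong_mul_conj [SFinite μ] (k : ℝ) :
    fourierAlong μ φ f k * (starRingEnd ℂ) (fourierAlong μ φ f k)
      = ∫ p, Complex.exp (-Complex.I * ((k * (φ p.1 - φ p.2) : ℝ) : ℂ))
          * ((f p.1 * f p.2 : ℝ) : ℂ) ∂(μ.prod μ) := by
  rw [fourierAlong, ← integral_conj, ← integral_prod_mul]
  congr 1 with p
  simp only [map_mul, Complex.conj_ofReal, ← Complex.exp_conj, map_neg, Complex.conj_I]
  rw [mul_mul_mul_comm, ← Complex.exp_add]
  push_cast
  ring_nf

theorem integrable_phase_mul_weight [SFinite μ] (hφ : Measurable φ) (hf : Integrable f μ)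
    (a b : ℝ) :
    Integrable (fun q : ℝ × (α × α) =>
        Complex.exp (-Complex.I * ((q.1 * (φ q.2.1 - φ q.2.2) : ℝ) : ℂ))
          * ((f q.2.1 * f q.2.2 : ℝ) : ℂ))
      ((volume.restrict (Set.uIoc a b)).prod (μ.prod μ)) := by
  have : IsFiniteMeasure (volume.restrict (Set.uIoc a b)) :=
    inferInstanceAs (IsFiniteMeasure (volume.restrict (Set.Ioc _ _)))
  have hweight : Integrable (fun p : α × α => ((f p.1 * f p.2 : ℝ) : ℂ)) (μ.prod μ) := by
    simpa using (hf.ofReal (𝕜 := ℂ)).mul_prod (hf.ofReal (𝕜 := ℂ))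
  simpa using ((integrable_const (μ := volume.restrict (Set.uIoc a b)) (1 : ℂ)).mul_prod
    hweight).bdd_mul (Measurable.aestronglyMeasurable (by fun_prop))
      (ae_of_all _ fun q => (norm_exp_neg_I_mul_ofReal (q.1 * (φ q.2.1 - φ q.2.2))).le)

theorem ofReal_integral_norm_sq_fourierAlong [SFinite μ] (hφ : Measurable φ)
    (hf : Integrable f μ) (K : ℝ) :
    ((∫ s in (-K)..K, ‖fourierAlong μ φ f s‖ ^ 2 : ℝ) : ℂ)
      = ∫ p, oscillatoryIntegral K (φ p.1 - φ p.2) * ((f p.1 * f p.2 : ℝ) : ℂ) ∂(μ.prod μ) := by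
  rw [← intervalIntegral.integral_ofReal]
  simp_rw [Complex.ofReal_pow, ← Complex.mul_conj', fourierAlong_mul_conj]
  rw [intervalIntegral_integral_swap (integrable_phase_mul_weight hφ hf (-K) K)]
  congr 1 with p
  rw [oscillatoryIntegral, ← intervalIntegral.integral_mul_const]

theorem integral_norm_sq_fourierAlong_le [SFinite μ] (hφ : Measurable φ) (hf : Integrable f μ)
    (K : ℝ) :
    ∫ s in (-K)..K, ‖fourierAlong μ φ f s‖ ^ 2
      ≤ ∫ p, ‖oscillatoryIntegral K (φ p.1 - φ p.2)‖ * (|f p.1| * |f p.2|) ∂(μ.prod μ) :=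
  calc ∫ s in (-K)..K, ‖fourierAlong μ φ f s‖ ^ 2
      ≤ ‖((∫ s in (-K)..K, ‖fourierAlong μ φ f s‖ ^ 2 : ℝ) : ℂ)‖ := by
        rw [Complex.norm_real, Real.norm_eq_abs]
        exact le_abs_self _
    _ ≤ ∫ p, ‖oscillatoryIntegral K (φ p.1 - φ p.2) * ((f p.1 * f p.2 : ℝ) : ℂ)‖ ∂(μ.prod μ) := by
        rw [ofReal_integral_norm_sq_fourierAlong hφ hf K]
        exact norm_integral_le_integral_norm _
    _ = _ := by simp

end FourierAlong

section NearPairs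

variable {α : Type*}

/-- The paper's set `E_ε`, cut down to `S × S`. -/
def nearPairs (φ : α → ℝ) (S : Set α) (ε : ℝ) : Set (α × α) :=
  {p | |φ p.1 - φ p.2| < ε ∧ p.1 ∈ S ∧ p.2 ∈ S}

theorem norm_oscillatoryIntegral_mul_le_indicator {φ f : α → ℝ} {S : Set α} {B K ε : ℝ}
    (hfB : ∀ y, |f y| ≤ B) (hfS : Function.support f ⊆ S) (hK : 0 ≤ K) (hε : 0 < ε)
    (p : α × α) :
    ‖oscillatoryIntegral K (φ p.1 - φ p.2)‖ * (|f p.1| * |f p.2|)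
      ≤ (nearPairs φ S ε).indicator (fun _ => 2 * K * B ^ 2) p + 2 / ε * (|f p.1| * |f p.2|) := by
  have hweight : 0 ≤ |f p.1| * |f p.2| := by positivity
  have hind : 0 ≤ (nearPairs φ S ε).indicator (fun _ => 2 * K * B ^ 2) p :=
    Set.indicator_nonneg (fun _ _ => by positivity) p
  by_cases hnear : |φ p.1 - φ p.2| < ε
  · by_cases hS2 : p.1 ∈ S ∧ p.2 ∈ S
    · have hmem : p ∈ nearPairs φ S ε := ⟨hnear, hS2⟩
      rw [Set.indicator_of_mem hmem]
      have hB : 0 ≤ B := (abs_nonneg _).trans (hfB p.1)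
      have hbound := mul_le_mul (norm_oscillatoryIntegral_le_two_mul hK (φ p.1 - φ p.2))
        (mul_le_mul (hfB p.1) (hfB p.2) (abs_nonneg _) hB) hweight (by positivity)
      nlinarith [show 0 ≤ 2 / ε * (|f p.1| * |f p.2|) by positivity]
    · have hzero : |f p.1| * |f p.2| = 0 := by
        rcases not_and_or.mp hS2 with h | h <;>
          simp [Function.notMem_support.mp (fun hp => h (hfS hp))]
      rw [hzero, mul_zero, mul_zero, add_zero]
      exact hind
  · have hfar : ε ≤ |φ p.1 - φ p.2| := not_lt.mp hnear
    have hosc : ‖oscillatoryIntegral K (φ p.1 - φ p.2)‖ ≤ 2 / ε :=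
      (norm_oscillatoryIntegral_le_two_div K (abs_pos.mp (hε.trans_le hfar))).trans
        (by gcongr)
    nlinarith [mul_le_mul_of_nonneg_right hosc hweight]

variable [MeasurableSpace α]

theorem measurableSet_nearPairs {φ : α → ℝ} {S : Set α} (hφ : Measurable φ) (hS : MeasurableSet S)
    (ε : ℝ) : MeasurableSet (nearPairs φ S ε) :=
  (measurableSet_lt (f := fun p : α × α => |φ p.1 - φ p.2|) (by fun_prop) measurable_const).inter
    (hS.prod hS)

theorem integral_norm_oscillatoryIntegral_mul_le {μ : Measure α} [SFinite μ] {φ f : α → ℝ}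
    {S : Set α} {B K ε : ℝ} (hφ : Measurable φ) (hS : MeasurableSet S) (hμS : μ S ≠ ⊤)
    (hf : Integrable f μ) (hfB : ∀ y, |f y| ≤ B) (hfS : Function.support f ⊆ S)
    (hK : 0 ≤ K) (hε : 0 < ε) :
    ∫ p, ‖oscillatoryIntegral K (φ p.1 - φ p.2)‖ * (|f p.1| * |f p.2|) ∂(μ.prod μ)
      ≤ 2 * K * B ^ 2 * ((μ.prod μ) (nearPairs φ S ε)).toReal
        + 2 / ε * (∫ y, |f y| ∂μ) ^ 2 := by
  set T := nearPairs φ S ε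
  have hT : MeasurableSet T := measurableSet_nearPairs hφ hS ε
  have hμT : (μ.prod μ) T ≠ ⊤ := by
    have hTS : T ⊆ S ×ˢ S := fun p hp => hp.2
    refine ne_top_of_le_ne_top ?_ (measure_mono hTS)
    rw [Measure.prod_prod]
    exact ENNReal.mul_ne_top hμS hμS
  have hweight : Integrable (fun p : α × α => |f p.1| * |f p.2|) (μ.prod μ) :=
    hf.abs.mul_prod hf.abs
  have hpoint := norm_oscillatoryIntegral_mul_le_indicator (φ := φ) hfB hfS hK hε
  have hind : Integrable (T.indicator fun _ => 2 * K * B ^ 2) (μ.prod μ) :=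
    (integrableOn_const hμT).integrable_indicator hT
  calc _ ≤ ∫ p, T.indicator (fun _ => 2 * K * B ^ 2) p + 2 / ε * (|f p.1| * |f p.2|) ∂(μ.prod μ) :=
        integral_mono_of_nonneg (ae_of_all _ fun p => by positivity)
          (hind.add (hweight.const_mul _))
          (ae_of_all _ hpoint)
    _ = _ := by
        rw [integral_add hind (hweight.const_mul _), integral_indicator_const _ hT,
          integral_const_mul, integral_prod_mul (fun y => |f y|) (fun y => |f y|), smul_eq_mul,
          Measure.real]
        ring

end NearPairs

section InnerProductSpace

variable {E : Type*} [NormedAddCommGroup E] [InnerProductSpace ℝ E] [FiniteDimensional ℝ E]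
  [MeasurableSpace E] [BorelSpace E] {n : ℕ} {xhat : E} {R ε : ℝ}

theorem volume_slab_inter_closedBall_le (hn : Module.finrank ℝ E = n + 1) (hx : ‖xhat‖ = 1)
    (c : ℝ) (hR : 0 ≤ R) (hε : 0 ≤ ε) :
    volume {y : E | |⟪xhat, y⟫ - c| < ε ∧ y ∈ Metric.closedBall 0 R}
      ≤ ENNReal.ofReal (2 * ε * (2 * R) ^ n) := by
  obtain ⟨b, hb⟩ := Orthonormal.exists_orthonormalBasis_extension_of_card_eq (𝕜 := ℝ)
    (v := fun _ : Fin (n + 1) => xhat) (s := {0}) (by simp [hn])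
    ⟨fun _ => hx, fun i j hij => absurd (Subtype.ext (i.2.trans j.2.symm)) hij⟩
  let coords : E → Fin (n + 1) → ℝ := fun y => WithLp.ofLp (b.repr y)
  let box : Set (Fin (n + 1) → ℝ) :=
    Set.univ.pi (Fin.cons (Set.Ioo (c - ε) (c + ε)) fun _ => Set.Icc (-R) R)
  have hcoords : MeasurePreserving coords :=
    (PiLp.volume_preserving_ofLp _).comp b.measurePreserving_repr
  have hsub : {y : E | |⟪xhat, y⟫ - c| < ε ∧ y ∈ Metric.closedBall 0 R} ⊆ coords ⁻¹' box := by
    rintro y ⟨hslab, hball⟩ i -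
    cases i using Fin.cases with
    | zero =>
      have hfirst : coords y 0 = ⟪xhat, y⟫ := by simp [coords, b.repr_apply_apply, hb 0 rfl]
      rw [Fin.cons_zero, Set.mem_Ioo, hfirst]
      exact ⟨by linarith [(abs_lt.mp hslab).1], by linarith [(abs_lt.mp hslab).2]⟩
    | succ i =>
      rw [Fin.cons_succ]
      exact abs_le.mp (((PiLp.norm_apply_le _ _).trans_eq (b.repr.norm_map y)).trans
        (mem_closedBall_zero_iff.mp hball))
  have hbox : MeasurableSet box :=
    MeasurableSet.univ_pi fun i => by
      cases i using Fin.cases <;> simp [measurableSet_Ioo, measurableSet_Icc]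
  calc _ ≤ volume (coords ⁻¹' box) := measure_mono hsub
    _ = volume box := hcoords.measure_preimage hbox.nullMeasurableSet
    _ = ENNReal.ofReal (2 * ε * (2 * R) ^ n) := by
      simp only [box, volume_pi_pi, Fin.prod_univ_succ, Fin.cons_zero, Fin.cons_succ,
        Real.volume_Ioo, Real.volume_Icc, Finset.prod_const, Finset.card_univ, Fintype.card_fin]
      rw [← ENNReal.ofReal_pow (by linarith), ← ENNReal.ofReal_mul (by linarith)]
      ring_nf

theorem volume_prod_nearPairs_inner_le (hn : Module.finrank ℝ E = n + 1) (hx : ‖xhat‖ = 1)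
    (hR : 0 ≤ R) (hε : 0 ≤ ε) :
    (volume.prod volume) (nearPairs (fun y => ⟪xhat, y⟫) (Metric.closedBall 0 R) ε)
      ≤ ENNReal.ofReal (2 * ε * (2 * R) ^ n) * volume (Metric.closedBall (0 : E) R) := by
  rw [Measure.prod_apply (measurableSet_nearPairs (by fun_prop) measurableSet_closedBall ε)]
  calc _ ≤ ∫⁻ y, (Metric.closedBall (0 : E) R).indicator
          (fun _ => ENNReal.ofReal (2 * ε * (2 * R) ^ n)) y :=
        lintegral_mono fun y => ?_
    _ = _ := by rw [lintegral_indicator measurableSet_closedBall, setLIntegral_const]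
  by_cases hy : y ∈ Metric.closedBall 0 R
  · rw [Set.indicator_of_mem hy]
    refine (measure_mono fun z hz => ?_).trans
      (volume_slab_inter_closedBall_le hn hx ⟪xhat, y⟫ hR hε)
    exact ⟨by rw [abs_sub_comm]; exact hz.1, hz.2.2⟩
  · rw [Set.indicator_of_notMem hy, nonpos_iff_eq_zero]
    exact measure_mono_null (fun z hz => absurd hz.2.1 hy) measure_empty

theorem integral_norm_sq_fourierAlong_inner_le (hn : Module.finrank ℝ E = n + 1)
    (hx : ‖xhat‖ = 1) {f : E → ℝ} (hf : Integrable f) {B K : ℝ} (hfB : ∀ y, |f y| ≤ B)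
    (hR : 0 ≤ R) (hfS : Function.support f ⊆ Metric.closedBall 0 R) (hK : 0 ≤ K) (hε : 0 < ε) :
    ∫ s in (-K)..K, ‖fourierAlong volume (fun y => ⟪xhat, y⟫) f s‖ ^ 2
      ≤ 2 * K * B ^ 2 * (2 * ε * (2 * R) ^ n * (volume (Metric.closedBall (0 : E) R)).toReal)
        + 2 / ε * (∫ y, |f y|) ^ 2 := by
  have hφ : Measurable fun y : E => ⟪xhat, y⟫ := by fun_prop
  have hnear :
      ((volume.prod volume) (nearPairs (fun y => ⟪xhat, y⟫) (Metric.closedBall 0 R) ε)).toReal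
      ≤ 2 * ε * (2 * R) ^ n * (volume (Metric.closedBall (0 : E) R)).toReal := by
    refine (ENNReal.toReal_mono
      (ENNReal.mul_ne_top ENNReal.ofReal_ne_top measure_closedBall_lt_top.ne)
      (volume_prod_nearPairs_inner_le hn hx hR hε.le)).trans_eq ?_
    rw [ENNReal.toReal_mul, ENNReal.toReal_ofReal (by positivity)]
  calc _ ≤ _ := integral_norm_sq_fourierAlong_le hφ hf K
    _ ≤ _ := integral_norm_oscillatoryIntegral_mul_le hφ measurableSet_closedBall
          measure_closedBall_lt_top.ne hf hfB hfS hK hε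
    _ ≤ _ := by gcongr

end InnerProductSpace

theorem intervalIntegral_intervalIntegral_comp_sub_le {θ : ℝ → ℝ} (hθ : Continuous θ)
    (hθ0 : ∀ s, 0 ≤ θ s) {a b : ℝ} (hab : a ≤ b) :
    ∫ k₁ in a..b, ∫ k₂ in a..b, θ (k₁ - k₂) ≤ (b - a) * ∫ s in -(b - a)..(b - a), θ s := by
  have hinner : ∀ k₁ ∈ Set.Icc a b, ∫ k₂ in a..b, θ (k₁ - k₂) ≤ ∫ s in -(b - a)..(b - a), θ s := by
    intro k₁ hk₁
    rw [intervalIntegral.integral_comp_sub_left θ k₁]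
    exact intervalIntegral.integral_mono_interval (by linarith [hk₁.1]) (by linarith)
      (by linarith [hk₁.2]) (ae_of_all _ fun s => hθ0 s) (hθ.intervalIntegrable _ _)
  calc _ ≤ ∫ _ in a..b, ∫ s in -(b - a)..(b - a), θ s :=
        intervalIntegral.integral_mono_on hab
          ((intervalIntegral.continuous_parametric_intervalIntegral_of_continuous'
            (by fun_prop) a b).intervalIntegrable _ _) intervalIntegrable_const hinner
    _ = _ := by rw [intervalIntegral.integral_const, smul_eq_mul]

theorem ftSigmaSq_smul (σ : EuclideanSpace ℝ (Fin 3) → ℝ) (xhat : EuclideanSpace ℝ (Fin 3))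
    (s : ℝ) :
    ftSigmaSq σ (s • xhat) = (((2 * π : ℝ) ^ (-(3 : ℝ)/2) : ℝ) : ℂ)
      * fourierAlong volume (fun y => ⟪xhat, y⟫) (fun y => σ y ^ 2) s := by
  simp only [ftSigmaSq, fourierAlong, real_inner_smul_left]

theorem intervalIntegral_intervalIntegral_norm_ftSigmaSq_sq_le {σ : EuclideanSpace ℝ (Fin 3) → ℝ}
    (hσ : Integrable fun y => σ y ^ 2) (xhat : EuclideanSpace ℝ (Fin 3)) {K : ℝ} (hK : 0 ≤ K) :
    ∫ k₁ in K..(2 * K), ∫ k₂ in K..(2 * K), ‖ftSigmaSq σ ((k₁ - k₂) • xhat)‖ ^ 2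
      ≤ K * ∫ s in (-K)..K,
          ‖fourierAlong volume (fun y => ⟪xhat, y⟫) (fun y => σ y ^ 2) s‖ ^ 2 := by
  set g := fourierAlong volume (fun y => ⟪xhat, y⟫) (fun y => σ y ^ 2)
  have hg : Continuous g := continuous_fourierAlong (by fun_prop) hσ
  have hc : ‖(((2 * π : ℝ) ^ (-(3 : ℝ)/2) : ℝ) : ℂ)‖ ≤ 1 := by
    rw [Complex.norm_real, Real.norm_eq_abs, abs_of_pos (by positivity)]
    exact Real.rpow_le_one_of_one_le_of_nonpos (by nlinarith [Real.pi_gt_three]) (by norm_num)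
  have hθ : Continuous fun s : ℝ => ‖ftSigmaSq σ (s • xhat)‖ ^ 2 := by
    simp_rw [ftSigmaSq_smul]
    exact (continuous_const.mul hg).norm.pow 2
  have hθg : ∀ s : ℝ, ‖ftSigmaSq σ (s • xhat)‖ ^ 2 ≤ ‖g s‖ ^ 2 := fun s => by
    rw [ftSigmaSq_smul, norm_mul]
    gcongr
    exact mul_le_of_le_one_left (norm_nonneg _) hc
  calc _ ≤ (2 * K - K) * ∫ s in -(2 * K - K)..(2 * K - K), ‖ftSigmaSq σ (s • xhat)‖ ^ 2 :=
        intervalIntegral_intervalIntegral_comp_sub_le hθ (fun _ => by positivity) (by linarith)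
    _ ≤ K * ∫ s in (-K)..K, ‖g s‖ ^ 2 := by
        rw [show 2 * K - K = K by ring]
        gcongr
        exact intervalIntegral.integral_mono_on (by linarith) (hθ.intervalIntegrable _ _)
          ((hg.norm.pow 2).intervalIntegrable _ _) fun s _ => hθg s

/-- The averaged difference-frequency estimate:
`K⁻² ∫_K^{2K}∫_K^{2K} |σ²^((k₁-k₂)x̂)|² dk₁dk₂ ≤ C K^{-1/2}`, `C` independent of `K`, `x̂`. -/
theorem avg_difference_frequency_estimate
    (D : Set (EuclideanSpace ℝ (Fin 3))) (hD : Bornology.IsBounded D)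
    (σ : EuclideanSpace ℝ (Fin 3) → ℝ)
    (hσbdd : ∃ M : ℝ, ∀ x, |σ x| ≤ M) (hσmeas : Measurable σ)
    (hσsupp : Function.support σ ⊆ D) :
    ∃ C : ℝ, 0 < C ∧ ∀ xhat : EuclideanSpace ℝ (Fin 3), ‖xhat‖ = 1 →
      ∀ K : ℝ, 0 < K →
        (1 / K ^ 2) * ∫ k₁ in K..(2*K), ∫ k₂ in K..(2*K),
            ‖ftSigmaSq σ ((k₁ - k₂) • xhat)‖ ^ 2
          ≤ C * K ^ (-(1 : ℝ)/2) := by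
  obtain ⟨M, hM⟩ := hσbdd
  obtain ⟨R, hR, hDR⟩ := hD.subset_closedBall_lt 0 0
  set f : EuclideanSpace ℝ (Fin 3) → ℝ := fun y => σ y ^ 2
  have hfB : ∀ y, |f y| ≤ M ^ 2 := fun y => by
    simpa [f] using pow_le_pow_left₀ (abs_nonneg _) (hM y) 2
  have hfS : Function.support f ⊆ Metric.closedBall 0 R := fun y hy =>
    hDR (hσsupp (by simpa [f] using hy))
  have hf : Integrable f := (integrableOn_iff_integrable_of_support_subset hfS).mp
    (Measure.integrableOn_of_bounded measure_closedBall_lt_top.ne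
      (hσmeas.pow_const 2).aestronglyMeasurable (ae_of_all _ fun y => hfB y))
  set V := (volume (Metric.closedBall (0 : EuclideanSpace ℝ (Fin 3)) R)).toReal
  set I := ∫ y, |f y|
  refine ⟨16 * M ^ 4 * R ^ 2 * V + 2 * I ^ 2 + 1, by positivity, fun xhat hx K hK => ?_⟩
  have hsK : 0 < √K := Real.sqrt_pos.2 hK
  have henergy := integral_norm_sq_fourierAlong_inner_le (n := 2) (by simp) hx hf hfB hR.le hfS
    hK.le (inv_pos.2 hsK)
  have havg := intervalIntegral_intervalIntegral_norm_ftSigmaSq_sq_le hf xhat hK.le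
  rw [show K ^ (-(1 : ℝ) / 2) = (√K)⁻¹ by
    rw [neg_div, Real.rpow_neg hK.le, Real.sqrt_eq_rpow, one_div]]
  calc _ ≤ 1 / K ^ 2 * (K * (2 * K * (M ^ 2) ^ 2 * (2 * (√K)⁻¹ * (2 * R) ^ 2 * V)
          + 2 / (√K)⁻¹ * I ^ 2)) := by
        gcongr
        exact havg.trans (by gcongr)
    _ = (16 * M ^ 4 * R ^ 2 * V + 2 * I ^ 2) * (√K)⁻¹ := by
        have hK2 : √K ^ 2 = K := Real.sq_sqrt hK.le
        field_simp
        linear_combination 2 * I ^ 2 * hK2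
    _ ≤ _ := mul_le_mul_of_nonneg_right (by linarith) (by positivity)
end

section
/- Let σ ∈ L^∞(ℝ³) with supp σ ⊆ D bounded, x̂ ∈ S², and τ ≥ 0. Then there exists K₀ > τ, independent of x̂, such that for all K > K₀: (1/K²)·∫_K^{2K} ∫_K^{2K} |σ²‾^((k₁ + k₂ + τ) x̂)|² dk₁ dk₂ ≤ 2·∫_2^5 |σ²‾^(K s x̂)|² ds ≤ C·K^{−1/2}, with C independent of τ and x̂. -/
open MeasureTheory Real
open scoped RealInnerProductSpace

lemma norm_exp_neg_I_real (r : ℝ) : ‖Complex.exp (-Complex.I * (r:ℂ))‖ = 1 := by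
  rw [Complex.norm_exp]
  simp

lemma norm_exp_I_real (r : ℝ) : ‖Complex.exp (Complex.I * (r:ℂ))‖ = 1 := by
  rw [Complex.norm_exp]
  simp

lemma norm_exp_neg_I_mul_real (a s : ℝ) : ‖Complex.exp (-Complex.I * (a:ℂ) * (s:ℂ))‖ = 1 := by
  rw [show -Complex.I * (a:ℂ) * (s:ℂ) = -Complex.I * ((a*s : ℝ) : ℂ) by push_cast; ring]
  exact norm_exp_neg_I_real _

lemma Iu_cont {g : EuclideanSpace ℝ (Fin 3) → ℝ} (hgmeas : Measurable g)
    (hg_int : Integrable g) (hg_nonneg : ∀ y, 0 ≤ g y)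
    (t : EuclideanSpace ℝ (Fin 3) → ℝ) (htc : Continuous t) :
    Continuous (fun u : ℝ => ∫ y, Complex.exp (-Complex.I * ((u * t y : ℝ) : ℂ)) * (g y : ℂ)) := by
  apply continuous_of_dominated (bound := g)
  · intro u
    exact ((((Complex.measurable_ofReal.comp (htc.measurable.const_mul u)).const_mul
      (-Complex.I)).cexp).mul (Complex.measurable_ofReal.comp hgmeas)).aestronglyMeasurable
  · intro u
    filter_upwards with y
    rw [norm_mul, norm_exp_neg_I_real, one_mul, Complex.norm_real, Real.norm_eq_abs,
      abs_of_nonneg (hg_nonneg y)]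
  · exact hg_int
  · filter_upwards with y
    have : Continuous fun u : ℝ => -Complex.I * ((u * t y : ℝ) : ℂ) :=
      continuous_const.mul (Complex.continuous_ofReal.comp (continuous_id.mul continuous_const))
    exact (Complex.continuous_exp.comp this).mul continuous_const

lemma slab_vol(xhat : EuclideanSpace ℝ (Fin 3)) (hx : ‖xhat‖ = 1) {R δ : ℝ} (b : ℝ) :
    volume (Metric.closedBall (0 : EuclideanSpace ℝ (Fin 3)) R ∩ {z | |⟪xhat, z⟫ - b| ≤ δ})
      ≤ ENNReal.ofReal (2*δ) * (ENNReal.ofReal (2*R) * ENNReal.ofReal (2*R)) := by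
  have horth : Orthonormal ℝ (Set.restrict {0} (fun _ : Fin 3 => xhat)) := by
    constructor
    · intro i; exact hx
    · intro i j hij
      exact absurd (Subtype.ext (by rw [i.2, j.2])) hij
  obtain ⟨b3, hb3⟩ := horth.exists_orthonormalBasis_extension_of_card_eq
    (by simp [finrank_euclideanSpace])
  have hb30 : b3 0 = xhat := hb3 0 rfl
  set s' : Fin 3 → Set ℝ := fun i => if i = 0 then Set.Icc (b-δ) (b+δ) else Set.Icc (-R) R
    with hs'
  have hmp := (EuclideanSpace.volume_preserving_symm_measurableEquiv_toLp (Fin 3)).comp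
      b3.measurePreserving_repr
  have hsub : Metric.closedBall (0 : EuclideanSpace ℝ (Fin 3)) R ∩ {z | |⟪xhat, z⟫ - b| ≤ δ}
      ⊆ (⇑((MeasurableEquiv.toLp 2 (Fin 3 → ℝ)).symm) ∘ ⇑b3.repr) ⁻¹' (Set.univ.pi s') := by
    rintro z ⟨hz1, hz2⟩
    have hzn : ‖z‖ ≤ R := by simpa [Metric.mem_closedBall, dist_eq_norm] using hz1
    intro i _
    have hcoord : (⇑((MeasurableEquiv.toLp 2 (Fin 3 → ℝ)).symm) ∘ ⇑b3.repr) z i = ⟪b3 i, z⟫ := by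
      rw [show (⇑((MeasurableEquiv.toLp 2 (Fin 3 → ℝ)).symm) ∘ ⇑b3.repr) z i = b3.repr z i from rfl,
        b3.repr_apply_apply]
    rw [hcoord]
    by_cases h0 : i = 0
    · subst h0
      rw [hb30] at *
      have h2 : |⟪xhat, z⟫ - b| ≤ δ := hz2
      simp only [hs', if_pos rfl, Set.mem_Icc]
      constructor <;> [linarith [(abs_le.1 h2).1]; linarith [(abs_le.1 h2).2]]
    · have hle : |⟪b3 i, z⟫| ≤ R := by
        calc |⟪b3 i, z⟫| ≤ ‖b3 i‖ * ‖z‖ := abs_real_inner_le_norm _ _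
          _ = ‖z‖ := by rw [b3.orthonormal.1 i, one_mul]
          _ ≤ R := hzn
      simp only [hs', if_neg h0, Set.mem_Icc]
      constructor <;> [linarith [(abs_le.1 hle).1]; linarith [(abs_le.1 hle).2]]
  have hTmeas : MeasurableSet (Set.univ.pi s') :=
    MeasurableSet.univ_pi (fun i => by by_cases h : i = 0 <;> simp [hs', h, measurableSet_Icc])
  calc volume (Metric.closedBall (0 : EuclideanSpace ℝ (Fin 3)) R ∩ {z | |⟪xhat, z⟫ - b| ≤ δ})
      ≤ volume ((⇑((MeasurableEquiv.toLp 2 (Fin 3 → ℝ)).symm) ∘ ⇑b3.repr) ⁻¹' (Set.univ.pi s')) :=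
        measure_mono hsub
    _ = volume (Set.univ.pi s') := hmp.measure_preimage hTmeas.nullMeasurableSet
    _ ≤ ENNReal.ofReal (2*δ) * (ENNReal.ofReal (2*R) * ENNReal.ofReal (2*R)) := by
        rw [volume_pi_pi, Fin.prod_univ_three]
        have e0 : s' 0 = Set.Icc (b-δ) (b+δ) := by simp [hs']
        have e1 : s' 1 = Set.Icc (-R) R := by simp [hs']
        have e2 : s' 2 = Set.Icc (-R) R := by simp [hs']
        rw [e0, e1, e2]
        simp only [Real.volume_Icc]
        rw [show b + δ - (b - δ) = 2*δ by ring, show R - (-R) = 2*R by ring, mul_assoc]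

lemma g_int {σ : EuclideanSpace ℝ (Fin 3) → ℝ} {M R : ℝ} (hσmeas : Measurable σ)
    (hbd : ∀ x, |σ x| ≤ M)
    (hsupp : Function.support σ ⊆ Metric.closedBall 0 R) :
    Integrable (fun y => (σ y) ^ 2) := by
  have hg_supp : Function.support (fun y => (σ y) ^ 2) ⊆ Metric.closedBall 0 R := by
    intro y hy
    apply hsupp
    simp only [Function.mem_support] at hy ⊢
    exact fun h => hy (by simp [h])
  have hio : IntegrableOn (fun y => (σ y) ^ 2) (Metric.closedBall 0 R) := by
    apply Measure.integrableOn_of_bounded measure_closedBall_lt_top.ne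
      ((hσmeas.pow_const 2).aestronglyMeasurable)
    filter_upwards with y
    rw [Real.norm_eq_abs, abs_of_nonneg (sq_nonneg _), ← sq_abs]
    exact pow_le_pow_left₀ (abs_nonneg _) (hbd y) 2
  rw [← Set.indicator_eq_self.2 hg_supp]
  exact hio.integrable_indicator measurableSet_closedBall

lemma ft_cont {σ : EuclideanSpace ℝ (Fin 3) → ℝ} {M R : ℝ} (hσmeas : Measurable σ)
    (hbd : ∀ x, |σ x| ≤ M) (hsupp : Function.support σ ⊆ Metric.closedBall 0 R)
    (xhat : EuclideanSpace ℝ (Fin 3)) :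
    Continuous fun u : ℝ => ‖ftSigmaSq σ (u • xhat)‖ ^ 2 := by
  have hg_int : Integrable (fun y => (σ y)^2) := g_int hσmeas hbd hsupp
  have htc : Continuous fun y : EuclideanSpace ℝ (Fin 3) => (⟪xhat, y⟫ : ℝ) :=
    continuous_const.inner continuous_id
  have hIu := Iu_cont (hσmeas.pow_const 2) hg_int (fun y => sq_nonneg _) _ htc
  have heq : (fun u : ℝ => ftSigmaSq σ (u • xhat))
      = fun u => (((2 * π : ℝ) ^ (-(3 : ℝ)/2) : ℝ) : ℂ) *
        ∫ y, Complex.exp (-Complex.I * ((u * ⟪xhat, y⟫ : ℝ) : ℂ)) * (((σ y)^2 : ℝ) : ℂ) := by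
    funext u
    rw [ftSigmaSq]
    congr 1
    apply integral_congr_ae
    filter_upwards with y
    rw [real_inner_smul_left]
  have hc : Continuous fun u : ℝ => ftSigmaSq σ (u • xhat) := by
    rw [heq]
    exact continuous_const.mul hIu
  exact hc.norm.pow 2

set_option maxHeartbeats 2000000 in
lemma stepB {σ : EuclideanSpace ℝ (Fin 3) → ℝ} {M R : ℝ} (hσmeas : Measurable σ)
    (hbd : ∀ x, |σ x| ≤ M) (hR : 0 ≤ R)
    (hsupp : Function.support σ ⊆ Metric.closedBall 0 R)
    (xhat : EuclideanSpace ℝ (Fin 3)) (hx : ‖xhat‖ = 1) {K : ℝ} (hK : 1 ≤ K) :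
    ∫ s in (2:ℝ)..5, ‖ftSigmaSq σ ((K * s) • xhat)‖ ^ 2
      ≤ (M^4 * (24 * R^2 * (volume (Metric.closedBall (0:EuclideanSpace ℝ (Fin 3)) R)).toReal
          + 2 * (volume (Metric.closedBall (0:EuclideanSpace ℝ (Fin 3)) R)).toReal ^ 2))
        * K ^ (-(1:ℝ)/2) := by
  classical
  set B := Metric.closedBall (0:EuclideanSpace ℝ (Fin 3)) R with hBdef
  set V := (volume B).toReal with hVdef
  have hM : 0 ≤ M := le_trans (abs_nonneg _) (hbd 0)
  have hK0 : (0:ℝ) < K := lt_of_lt_of_le one_pos hK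
  set δ := K ^ (-(1:ℝ)/2) with hδdef
  have hδpos : 0 < δ := Real.rpow_pos_of_pos hK0 _
  have hhalf : (0:ℝ) < K ^ ((1:ℝ)/2) := Real.rpow_pos_of_pos hK0 _
  have hδinv : K ^ ((1:ℝ)/2) * δ = 1 := by
    rw [hδdef, ← Real.rpow_add hK0]; norm_num
  have hKδ : K * δ = K ^ ((1:ℝ)/2) := by
    rw [hδdef]
    nth_rewrite 1 [show K = K ^ (1:ℝ) from (Real.rpow_one K).symm]
    rw [← Real.rpow_add hK0]; norm_num
  set g : EuclideanSpace ℝ (Fin 3) → ℝ := fun y => (σ y) ^ 2 with hgdef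
  have hg_nonneg : ∀ y, 0 ≤ g y := fun y => sq_nonneg _
  have hg_le : ∀ y, g y ≤ M^2 := by
    intro y
    have h1 := hbd y
    have h2 := abs_nonneg (σ y)
    have h3 := sq_abs (σ y)
    show (σ y) ^ 2 ≤ M ^ 2
    nlinarith
  have hg_supp : Function.support g ⊆ B := by
    intro y hy
    apply hsupp
    simp only [Function.mem_support, hgdef] at hy ⊢
    exact fun h => hy (by simp [h])
  have hgmeas : Measurable g := hσmeas.pow_const 2
  have hg_int : Integrable g := g_int hσmeas hbd hsupp
  have hf_int : Integrable (fun y => ((g y : ℝ) : ℂ)) := hg_int.ofReal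
  set t : EuclideanSpace ℝ (Fin 3) → ℝ := fun y => ⟪xhat, y⟫ with htdef
  have htc : Continuous t := continuous_const.inner continuous_id
  set Iu : ℝ → ℂ := fun u => ∫ y, Complex.exp (-Complex.I * ((u * t y : ℝ) : ℂ)) * (g y : ℂ)
    with hIudef
  have hIu_cont : Continuous Iu := Iu_cont hgmeas hg_int hg_nonneg t htc
  -- reduce to Iu
  have hft : ∀ s : ℝ, ‖ftSigmaSq σ ((K * s) • xhat)‖ ^ 2
      = ((2 * π : ℝ) ^ (-(3 : ℝ)/2)) ^ 2 * ‖Iu (K * s)‖ ^ 2 := by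
    intro s
    have : ftSigmaSq σ ((K * s) • xhat)
        = (((2 * π : ℝ) ^ (-(3 : ℝ)/2) : ℝ) : ℂ) * Iu (K * s) := by
      rw [ftSigmaSq, hIudef]
      congr 1
      apply integral_congr_ae
      filter_upwards with y
      rw [real_inner_smul_left]
    rw [this, norm_mul, Complex.norm_real, Real.norm_eq_abs,
      abs_of_nonneg (Real.rpow_nonneg (by positivity) _), mul_pow]
  have hc2 : ((2 * π : ℝ) ^ (-(3 : ℝ)/2)) ^ 2 ≤ 1 := by
    have h1 : (2 * π : ℝ) ^ (-(3 : ℝ)/2) ≤ 1 :=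
      Real.rpow_le_one_of_one_le_of_nonpos (by nlinarith [Real.pi_gt_three]) (by norm_num)
    nlinarith [Real.rpow_nonneg (show (0:ℝ) ≤ 2*π by positivity) (-(3:ℝ)/2)]
  -- main bound on ∫ ‖Iu (K s)‖²
  have main : ∫ s in (2:ℝ)..5, ‖Iu (K * s)‖ ^ 2
      ≤ (M^4 * (24 * R^2 * V + 2 * V^2)) * δ := by
    have h25 : (2:ℝ) ≤ 5 := by norm_num
    set ν := (volume : Measure ℝ).restrict (Set.Ioc (2:ℝ) 5) with hνdef
    haveI : IsFiniteMeasure ν := by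
      constructor
      rw [hνdef, Measure.restrict_apply_univ]
      simp [Real.volume_Ioc]
    set μ2 := (volume : Measure (EuclideanSpace ℝ (Fin 3))).prod (volume : Measure (EuclideanSpace ℝ (Fin 3))) with hμ2def
    set cc : EuclideanSpace ℝ (Fin 3) × EuclideanSpace ℝ (Fin 3) → ℂ :=
      fun p => -Complex.I * ((K * (t p.1 - t p.2) : ℝ) : ℂ) with hccdef
    set W : EuclideanSpace ℝ (Fin 3) × EuclideanSpace ℝ (Fin 3) → ℂ :=
      fun p => ∫ s in (2:ℝ)..5, Complex.exp (cc p * s) with hWdef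
    set Φ : ℝ → EuclideanSpace ℝ (Fin 3) × EuclideanSpace ℝ (Fin 3) → ℂ :=
      fun s p => (Complex.exp (-Complex.I * (((K*s) * t p.1 : ℝ) : ℂ)) * (g p.1 : ℂ))
        * (Complex.exp (Complex.I * (((K*s) * t p.2 : ℝ) : ℂ)) * (g p.2 : ℂ)) with hΦdef
    have hΦeq : ∀ (s : ℝ) p, Φ s p = Complex.exp (cc p * s) * ((g p.1 : ℂ) * (g p.2 : ℂ)) := by
      intro s p
      rw [hΦdef, hccdef]
      show (Complex.exp _ * _) * (Complex.exp _ * _) = _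
      rw [mul_mul_mul_comm, ← Complex.exp_add]
      congr 2
      push_cast
      ring
    have hPsq : ∀ z : ℂ, ‖z‖^2 = (z * (starRingEnd ℂ) z).re := by
      intro z
      rw [Complex.mul_conj]
      simp [Complex.sq_norm]
    have hconj : ∀ u : ℝ, (starRingEnd ℂ) (Iu u)
        = ∫ y, Complex.exp (Complex.I * ((u * t y : ℝ) : ℂ)) * (g y : ℂ) := by
      intro u
      rw [hIudef, ← integral_conj]
      apply integral_congr_ae
      filter_upwards with y
      rw [map_mul, ← Complex.exp_conj]
      congr 1
      · congr 1
        rw [map_mul, map_neg, Complex.conj_I, Complex.conj_ofReal]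
        ring
      · exact Complex.conj_ofReal _
    have hprod : ∀ s : ℝ, Iu (K*s) * (starRingEnd ℂ) (Iu (K*s)) = ∫ p, Φ s p ∂μ2 := by
      intro s
      rw [hconj (K*s), hIudef, hΦdef, hμ2def]
      exact (integral_prod_mul _ _).symm
    have htm : Measurable t := htc.measurable
    have hΦm : Measurable (Function.uncurry Φ) := by
      apply Measurable.mul
      · apply Measurable.mul
        · apply Measurable.cexp
          exact (Complex.measurable_ofReal.comp
            ((measurable_fst.const_mul K).mul
              (htm.comp (measurable_fst.comp measurable_snd)))).const_mul (-Complex.I)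
        · exact Complex.measurable_ofReal.comp (hgmeas.comp (measurable_fst.comp measurable_snd))
      · apply Measurable.mul
        · apply Measurable.cexp
          exact (Complex.measurable_ofReal.comp
            ((measurable_fst.const_mul K).mul
              (htm.comp (measurable_snd.comp measurable_snd)))).const_mul Complex.I
        · exact Complex.measurable_ofReal.comp (hgmeas.comp (measurable_snd.comp measurable_snd))
    have hnormΦ : ∀ (s : ℝ) p, ‖Φ s p‖ = g p.1 * g p.2 := by
      intro s p
      rw [hΦeq s p, norm_mul, norm_mul, Complex.norm_real, Complex.norm_real,
        Real.norm_eq_abs, Real.norm_eq_abs, abs_of_nonneg (hg_nonneg _),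
        abs_of_nonneg (hg_nonneg _), hccdef]
      rw [norm_exp_neg_I_mul_real, one_mul]
    have hgg_int : Integrable (fun p : EuclideanSpace ℝ (Fin 3) × EuclideanSpace ℝ (Fin 3)
        => g p.1 * g p.2) μ2 := hg_int.mul_prod hg_int
    have hbound_int : Integrable (fun q : ℝ × (EuclideanSpace ℝ (Fin 3) × EuclideanSpace ℝ (Fin 3))
        => g q.2.1 * g q.2.2) (ν.prod μ2) := by
      have h1 := (integrable_const (1:ℝ) (μ := ν)).mul_prod hgg_int
      simpa using h1
    have hΦint : Integrable (Function.uncurry Φ) (ν.prod μ2) := by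
      apply hbound_int.mono' hΦm.aestronglyMeasurable
      filter_upwards with q
      exact le_of_eq (hnormΦ q.1 q.2)
    have hPint : Integrable (fun s => Iu (K*s) * (starRingEnd ℂ) (Iu (K*s))) ν := by
      have hIKs : Continuous fun s : ℝ => Iu (K*s) :=
        hIu_cont.comp (continuous_const.mul continuous_id)
      have hcont2 : Continuous fun s : ℝ => Iu (K*s) * (starRingEnd ℂ) (Iu (K*s)) :=
        hIKs.mul (Complex.continuous_conj.comp hIKs)
      rw [hνdef]
      exact hcont2.integrableOn_Ioc
    have key : ∫ s in (2:ℝ)..5, ‖Iu (K*s)‖^2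
        = (∫ p, (W p * ((g p.1 : ℂ) * (g p.2 : ℂ))) ∂μ2).re := by
      rw [intervalIntegral.integral_of_le h25]
      have e1 : ∫ s in Set.Ioc (2:ℝ) 5, ‖Iu (K*s)‖^2
          = ∫ s, (Iu (K*s) * (starRingEnd ℂ) (Iu (K*s))).re ∂ν := by
        rw [hνdef]
        apply integral_congr_ae
        filter_upwards with s
        rw [hPsq]
      rw [e1]
      have e2 := integral_re (μ := ν) hPint
      simp only [RCLike.re_to_complex] at e2
      rw [e2]
      have e3 : ∫ s, Iu (K*s) * (starRingEnd ℂ) (Iu (K*s)) ∂ν = ∫ s, (∫ p, Φ s p ∂μ2) ∂ν := by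
        apply integral_congr_ae
        filter_upwards with s
        exact hprod s
      rw [e3, integral_integral_swap hΦint]
      congr 1
      apply integral_congr_ae
      filter_upwards with p
      have e4 : ∫ s, Φ s p ∂ν = ∫ s, Complex.exp (cc p * s) * ((g p.1 : ℂ) * (g p.2 : ℂ)) ∂ν :=
        integral_congr_ae (Filter.Eventually.of_forall fun s => hΦeq s p)
      rw [e4, integral_mul_const, hWdef, hνdef, ← intervalIntegral.integral_of_le h25]
    -- bounds on W
    have hW3 : ∀ p, ‖W p‖ ≤ 3 := by
      intro p
      rw [hWdef]
      have h := intervalIntegral.norm_integral_le_of_norm_le_const (C := 1) (a := (2:ℝ)) (b := 5)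
        (f := fun s : ℝ => Complex.exp (cc p * s)) ?_
      · refine h.trans (le_of_eq ?_)
        norm_num
      · intro x _
        rw [hccdef]
        exact le_of_eq (norm_exp_neg_I_mul_real _ _)
    have hW2 : ∀ p : EuclideanSpace ℝ (Fin 3) × EuclideanSpace ℝ (Fin 3),
        δ < |t p.1 - t p.2| → ‖W p‖ ≤ 2*δ := by
      intro p hd
      have hd0 : t p.1 - t p.2 ≠ 0 := by
        intro h
        rw [h, abs_zero] at hd
        linarith
      have hc0 : cc p ≠ 0 := by
        rw [hccdef]
        apply mul_ne_zero (neg_ne_zero.2 Complex.I_ne_zero)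
        rw [Ne, Complex.ofReal_eq_zero]
        exact mul_ne_zero (ne_of_gt hK0) hd0
      rw [hWdef]
      show ‖∫ s in (2:ℝ)..5, Complex.exp (cc p * s)‖ ≤ 2*δ
      rw [integral_exp_mul_complex hc0, norm_div]
      have hnum : ‖Complex.exp (cc p * (5:ℝ)) - Complex.exp (cc p * (2:ℝ))‖ ≤ 2 := by
        refine le_trans (norm_sub_le _ _) ?_
        rw [hccdef]
        rw [norm_exp_neg_I_mul_real, norm_exp_neg_I_mul_real]
        norm_num
      have hden : ‖cc p‖ = K * |t p.1 - t p.2| := by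
        rw [hccdef]
        rw [norm_mul, norm_neg, Complex.norm_I, one_mul, Complex.norm_real, Real.norm_eq_abs,
          abs_mul, abs_of_pos hK0]
      have h1 : K ^ ((1:ℝ)/2) ≤ K * |t p.1 - t p.2| := by
        rw [← hKδ]
        exact mul_le_mul_of_nonneg_left hd.le hK0.le
      calc ‖Complex.exp (cc p * (5:ℝ)) - Complex.exp (cc p * (2:ℝ))‖ / ‖cc p‖
          ≤ 2 / K ^ ((1:ℝ)/2) := by
            rw [hden]
            exact div_le_div₀ (by norm_num) hnum hhalf h1
        _ = 2*δ := by
            rw [div_eq_iff (ne_of_gt hhalf)]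
            linear_combination -2 * hδinv
    -- set U and ψ
    set U := (B ×ˢ B) ∩ {p : EuclideanSpace ℝ (Fin 3) × EuclideanSpace ℝ (Fin 3)
        | |t p.1 - t p.2| ≤ δ} with hUdef
    have hUmeas : MeasurableSet U :=
      (measurableSet_closedBall.prod measurableSet_closedBall).inter
        (measurableSet_le (((htc.comp continuous_fst).sub (htc.comp continuous_snd)).abs.measurable)
          measurable_const)
    have hBBfin : μ2 (B ×ˢ B) < ⊤ := by
      rw [hμ2def, Measure.prod_prod]
      exact ENNReal.mul_lt_top measure_closedBall_lt_top measure_closedBall_lt_top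
    have hUfin : μ2 U < ⊤ := lt_of_le_of_lt (measure_mono Set.inter_subset_left) hBBfin
    set ψ : EuclideanSpace ℝ (Fin 3) × EuclideanSpace ℝ (Fin 3) → ℝ :=
      fun p => (3*M^4) * Set.indicator U (fun _ => (1:ℝ)) p
        + (2*δ*M^4) * Set.indicator (B ×ˢ B) (fun _ => (1:ℝ)) p with hψdef
    have hind_nonneg : ∀ (S : Set (EuclideanSpace ℝ (Fin 3) × EuclideanSpace ℝ (Fin 3))) p,
        (0:ℝ) ≤ Set.indicator S (fun _ => (1:ℝ)) p := by
      intro S p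
      exact Set.indicator_nonneg (fun _ _ => by norm_num) p
    have hψ_int : Integrable ψ μ2 := by
      apply Integrable.add
      · exact ((integrableOn_const (C := (1:ℝ)) hUfin.ne).integrable_indicator hUmeas).const_mul _
      · exact ((integrableOn_const (C := (1:ℝ)) hBBfin.ne).integrable_indicator
          (measurableSet_closedBall.prod measurableSet_closedBall)).const_mul _
    have hgB : ∀ y, y ∉ B → g y = 0 := by
      intro y hy
      by_contra h
      exact hy (hg_supp (Function.mem_support.2 h))
    have hpnorm : ∀ p : EuclideanSpace ℝ (Fin 3) × EuclideanSpace ℝ (Fin 3),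
        ‖W p * ((g p.1 : ℂ) * (g p.2 : ℂ))‖ = ‖W p‖ * (g p.1 * g p.2) := by
      intro p
      rw [norm_mul, norm_mul, Complex.norm_real, Complex.norm_real, Real.norm_eq_abs,
        Real.norm_eq_abs, abs_of_nonneg (hg_nonneg _), abs_of_nonneg (hg_nonneg _)]
    have hpoint : ∀ p, ‖W p * ((g p.1 : ℂ) * (g p.2 : ℂ))‖ ≤ ψ p := by
      intro p
      rw [hpnorm p]
      by_cases hmem : p ∈ B ×ˢ B
      · have hgg : g p.1 * g p.2 ≤ M^4 := by
          have h1 := hg_le p.1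
          have h2 := hg_le p.2
          have h3 := hg_nonneg p.1
          have h4 := hg_nonneg p.2
          nlinarith
        have hggnn : 0 ≤ g p.1 * g p.2 := mul_nonneg (hg_nonneg _) (hg_nonneg _)
        have hM4 : (0:ℝ) ≤ M^4 := by positivity
        by_cases hdd : |t p.1 - t p.2| ≤ δ
        · have hU : p ∈ U := ⟨hmem, hdd⟩
          show _ ≤ (3*M^4) * _ + (2*δ*M^4) * _
          rw [Set.indicator_of_mem hU, Set.indicator_of_mem hmem]
          have h5 := hW3 p
          have h6 := norm_nonneg (W p)
          nlinarith [hδpos.le]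
        · show _ ≤ (3*M^4) * _ + (2*δ*M^4) * _
          rw [Set.indicator_of_notMem (fun h => hdd h.2), Set.indicator_of_mem hmem]
          have h5 := hW2 p (not_le.1 hdd)
          have h6 := norm_nonneg (W p)
          nlinarith
      · have : g p.1 * g p.2 = 0 := by
          rcases not_and_or.1 ((Set.mem_prod).not.1 hmem) with h | h
          · rw [hgB p.1 h, zero_mul]
          · rw [hgB p.2 h, mul_zero]
        rw [this, mul_zero]
        exact add_nonneg (mul_nonneg (by positivity) (hind_nonneg _ _))
          (mul_nonneg (by positivity) (hind_nonneg _ _))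
    have hre : (∫ p, W p * ((g p.1 : ℂ) * (g p.2 : ℂ)) ∂μ2).re ≤ ∫ p, ψ p ∂μ2 := by
      calc (∫ p, W p * ((g p.1 : ℂ) * (g p.2 : ℂ)) ∂μ2).re
          ≤ ‖∫ p, W p * ((g p.1 : ℂ) * (g p.2 : ℂ)) ∂μ2‖ := by
            exact Complex.re_le_norm _
        _ ≤ ∫ p, ‖W p * ((g p.1 : ℂ) * (g p.2 : ℂ))‖ ∂μ2 := norm_integral_le_integral_norm _
        _ ≤ ∫ p, ψ p ∂μ2 := integral_mono_of_nonneg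
            (Filter.Eventually.of_forall fun p => norm_nonneg _) hψ_int
            (Filter.Eventually.of_forall hpoint)
    have hψ_val : ∫ p, ψ p ∂μ2
        = 3*M^4 * (μ2 U).toReal + 2*δ*M^4 * (μ2 (B ×ˢ B)).toReal := by
      rw [hψdef]
      rw [integral_add
        (((integrableOn_const (C := (1:ℝ)) hUfin.ne).integrable_indicator hUmeas).const_mul _)
        (((integrableOn_const (C := (1:ℝ)) hBBfin.ne).integrable_indicator
          (measurableSet_closedBall.prod measurableSet_closedBall)).const_mul _)]
      rw [integral_const_mul, integral_const_mul, integral_indicator_const _ hUmeas,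
        integral_indicator_const _ (measurableSet_closedBall.prod measurableSet_closedBall)]
      simp [Measure.real, hBdef]
    set Λ := ENNReal.ofReal (2*δ) * (ENNReal.ofReal (2*R) * ENNReal.ofReal (2*R)) with hΛdef
    have hUvol : (μ2 U).toReal ≤ 2*δ*(2*R*(2*R)) * V := by
      have h1 : μ2 U ≤ Λ * volume B := by
        rw [hμ2def, Measure.prod_apply hUmeas]
        have hsl : ∀ y, (volume (Prod.mk y ⁻¹' U) : ENNReal)
            ≤ Set.indicator B (fun _ => Λ) y := by
          intro y
          by_cases hy : y ∈ B
          · rw [Set.indicator_of_mem hy, hΛdef]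
            refine le_trans (measure_mono ?_) (slab_vol xhat hx (t y))
            intro z hz
            obtain ⟨⟨hy', hz'⟩, hdd⟩ := hz
            refine ⟨hz', ?_⟩
            show |⟪xhat, z⟫ - t y| ≤ δ
            rw [show (⟪xhat, z⟫ : ℝ) = t z from rfl, abs_sub_comm]
            exact hdd
          · rw [Set.indicator_of_notMem hy]
            have hemp : Prod.mk y ⁻¹' U = ∅ := by
              ext z
              simp only [Set.mem_preimage, Set.mem_empty_iff_false, iff_false]
              intro hz
              exact hy hz.1.1
            rw [hemp]
            simp
        calc ∫⁻ y, volume (Prod.mk y ⁻¹' U) ≤ ∫⁻ y, Set.indicator B (fun _ => Λ) y :=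
              lintegral_mono hsl
          _ = Λ * volume B := by
              rw [lintegral_indicator measurableSet_closedBall, setLIntegral_const]
      have h2 : Λ * volume B ≠ ⊤ := by
        rw [hΛdef]
        exact ENNReal.mul_ne_top (ENNReal.mul_ne_top ENNReal.ofReal_ne_top
          (ENNReal.mul_ne_top ENNReal.ofReal_ne_top ENNReal.ofReal_ne_top))
          measure_closedBall_lt_top.ne
      calc (μ2 U).toReal ≤ (Λ * volume B).toReal := ENNReal.toReal_mono h2 h1
        _ = 2*δ*(2*R*(2*R)) * V := by
          rw [hΛdef, ENNReal.toReal_mul, ENNReal.toReal_mul, ENNReal.toReal_mul,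
            ENNReal.toReal_ofReal (by positivity), ENNReal.toReal_ofReal (by positivity),
            ← hVdef]
    have hBBvol : (μ2 (B ×ˢ B)).toReal = V * V := by
      rw [hμ2def, Measure.prod_prod, ENNReal.toReal_mul, ← hVdef]
    have hV0 : (0:ℝ) ≤ V := ENNReal.toReal_nonneg
    have hM4 : (0:ℝ) ≤ M^4 := by positivity
    calc ∫ s in (2:ℝ)..5, ‖Iu (K*s)‖^2
        = (∫ p, (W p * ((g p.1 : ℂ) * (g p.2 : ℂ))) ∂μ2).re := key
      _ ≤ ∫ p, ψ p ∂μ2 := hre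
      _ = 3*M^4 * (μ2 U).toReal + 2*δ*M^4 * (μ2 (B ×ˢ B)).toReal := hψ_val
      _ ≤ 3*M^4 * (2*δ*(2*R*(2*R)) * V) + 2*δ*M^4 * (V*V) := by
          have h7 : (0:ℝ) ≤ 2*δ*M^4 := by positivity
          have h8 := hUvol
          have h9 := hBBvol
          nlinarith
      _ = (M^4 * (24 * R^2 * V + 2 * V^2)) * δ := by ring
  calc ∫ s in (2:ℝ)..5, ‖ftSigmaSq σ ((K * s) • xhat)‖ ^ 2
      = ((2 * π : ℝ) ^ (-(3 : ℝ)/2)) ^ 2 * ∫ s in (2:ℝ)..5, ‖Iu (K * s)‖ ^ 2 := by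
        rw [← intervalIntegral.integral_const_mul]
        exact intervalIntegral.integral_congr (fun s _ => hft s)
    _ ≤ ∫ s in (2:ℝ)..5, ‖Iu (K * s)‖ ^ 2 := by
        have hnn : 0 ≤ ∫ s in (2:ℝ)..5, ‖Iu (K * s)‖ ^ 2 :=
          intervalIntegral.integral_nonneg (by norm_num) (fun u _ => by positivity)
        nlinarith
    _ ≤ (M^4 * (24 * R^2 * V + 2 * V^2)) * δ := main
    _ = (M^4 * (24 * R^2 * V + 2 * V^2)) * K ^ (-(1:ℝ)/2) := by rw [hδdef]

lemma stepA{h : ℝ → ℝ} (hcont : Continuous h) (hnn : ∀ u, 0 ≤ h u)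
    {K τ : ℝ} (hK : 1 ≤ K) (hτ : 0 ≤ τ) (hτK : τ ≤ K) :
    (1 / K ^ 2) * ∫ k₁ in K..(2*K), ∫ k₂ in K..(2*K), h (k₁ + k₂ + τ)
      ≤ 2 * ∫ s in (2:ℝ)..5, h (K * s) := by
  have hK0 : (0:ℝ) < K := lt_of_lt_of_le one_pos hK
  set F : ℝ → ℝ := fun w => ∫ x in (0:ℝ)..w, h x with hFdef
  have hII : ∀ a b : ℝ, IntervalIntegrable h volume a b := fun a b => hcont.intervalIntegrable a b
  have hFcont : Continuous F := intervalIntegral.continuous_primitive hII 0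
  have hsplit : ∀ a b : ℝ, (∫ x in a..b, h x) = F b - F a := by
    intro a b
    have := intervalIntegral.integral_add_adjacent_intervals (hII 0 a) (hII a b)
    rw [hFdef]
    dsimp only
    linarith
  have hEnn : (0:ℝ) ≤ ∫ s in (2:ℝ)..5, h (K * s) :=
    intervalIntegral.integral_nonneg (by norm_num) (fun u _ => hnn _)
  have hbig : (∫ x in (K*2)..(K*5), h x) = K * ∫ s in (2:ℝ)..5, h (K * s) := by
    have := intervalIntegral.integral_comp_mul_left h (ne_of_gt hK0) (a := 2) (b := 5)
    rw [this, smul_eq_mul, ← mul_assoc, mul_inv_cancel₀ (ne_of_gt hK0), one_mul]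
  set E : ℝ := ∫ x in (2*K+τ)..(4*K+τ), h x with hEdef
  have hinner : ∀ k₁ : ℝ, k₁ ∈ Set.uIcc K (2*K) →
      (∫ k₂ in K..(2*K), h (k₁ + k₂ + τ)) ≤ E := by
    intro k₁ hk₁
    rw [Set.uIcc_of_le (by linarith)] at hk₁
    obtain ⟨hk₁l, hk₁r⟩ := hk₁
    have e1 : (∫ k₂ in K..(2*K), h (k₁ + k₂ + τ)) = ∫ x in ((k₁+τ)+K)..((k₁+τ)+2*K), h x := by
      have e0 : (∫ k₂ in K..(2*K), h (k₁ + k₂ + τ)) = ∫ k₂ in K..(2*K), h ((k₁ + τ) + k₂) :=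
        intervalIntegral.integral_congr (fun x _ => by ring_nf)
      rw [e0, intervalIntegral.integral_comp_add_left h (k₁+τ)]
    rw [e1, hEdef]
    apply intervalIntegral.integral_mono_interval (by linarith) (by linarith) (by linarith)
      (Filter.Eventually.of_forall (fun x => hnn x)) (hII _ _)
  have hmid : (∫ k₁ in K..(2*K), ∫ k₂ in K..(2*K), h (k₁ + k₂ + τ)) ≤ K * E := by
    have hint1 : IntervalIntegrable (fun k₁ => ∫ k₂ in K..(2*K), h (k₁ + k₂ + τ)) volume K (2*K) := by
      have heq : (fun k₁ => ∫ k₂ in K..(2*K), h (k₁ + k₂ + τ))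
          = fun k₁ => F ((k₁+τ)+2*K) - F ((k₁+τ)+K) := by
        funext k₁
        have e0 : (∫ k₂ in K..(2*K), h (k₁ + k₂ + τ)) = ∫ k₂ in K..(2*K), h ((k₁ + τ) + k₂) :=
          intervalIntegral.integral_congr (fun x _ => by ring_nf)
        rw [e0, intervalIntegral.integral_comp_add_left h (k₁+τ), hsplit]
      rw [heq]
      exact ((hFcont.comp (by fun_prop)).sub (hFcont.comp (by fun_prop))).intervalIntegrable _ _
    calc (∫ k₁ in K..(2*K), ∫ k₂ in K..(2*K), h (k₁ + k₂ + τ))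
        ≤ ∫ _ in K..(2*K), E := by
          apply intervalIntegral.integral_mono_on (by linarith) hint1
            intervalIntegrable_const
          intro x hx
          exact hinner x (by rw [Set.uIcc_of_le (by linarith)]; exact hx)
      _ = K * E := by
          rw [intervalIntegral.integral_const, smul_eq_mul]
          ring_nf
  have hE5 : E ≤ ∫ x in (K*2)..(K*5), h x := by
    rw [hEdef]
    apply intervalIntegral.integral_mono_interval (by linarith) (by linarith) (by linarith)
      (Filter.Eventually.of_forall (fun x => hnn x)) (hII _ _)
  have hfinal : (∫ k₁ in K..(2*K), ∫ k₂ in K..(2*K), h (k₁ + k₂ + τ))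
      ≤ K^2 * ∫ s in (2:ℝ)..5, h (K * s) := by
    calc (∫ k₁ in K..(2*K), ∫ k₂ in K..(2*K), h (k₁ + k₂ + τ))
        ≤ K * E := hmid
      _ ≤ K * (K * ∫ s in (2:ℝ)..5, h (K * s)) := by
          rw [← hbig]
          exact mul_le_mul_of_nonneg_left hE5 hK0.le
      _ = K^2 * ∫ s in (2:ℝ)..5, h (K * s) := by ring
  rw [div_mul_eq_mul_div, one_mul, div_le_iff₀ (by positivity)]
  calc (∫ k₁ in K..(2*K), ∫ k₂ in K..(2*K), h (k₁ + k₂ + τ))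
      ≤ K^2 * ∫ s in (2:ℝ)..5, h (K * s) := hfinal
    _ ≤ (2 * ∫ s in (2:ℝ)..5, h (K * s)) * K^2 := by nlinarith

/-- The sum-frequency estimate: there is `K₀ > τ`, independent of `x̂`, with
`K⁻² ∫_K^{2K}∫_K^{2K} |σ²^((k₁+k₂+τ)x̂)|² ≤ 2∫_2^5 |σ²^(Ksx̂)|² ds ≤ C K^{-1/2}`
for all `K > K₀`, with `C` independent of `τ` and `x̂`. -/
theorem avg_sum_frequency_estimate
    (D : Set (EuclideanSpace ℝ (Fin 3))) (hD : Bornology.IsBounded D)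
    (σ : EuclideanSpace ℝ (Fin 3) → ℝ)
    (hσbdd : ∃ M : ℝ, ∀ x, |σ x| ≤ M) (hσmeas : Measurable σ)
    (hσsupp : Function.support σ ⊆ D) :
    ∃ C : ℝ, 0 < C ∧ ∀ τ : ℝ, 0 ≤ τ → ∃ K₀ : ℝ, τ < K₀ ∧
      ∀ xhat : EuclideanSpace ℝ (Fin 3), ‖xhat‖ = 1 →
        ∀ K : ℝ, K₀ < K →
          ((1 / K ^ 2) * ∫ k₁ in K..(2*K), ∫ k₂ in K..(2*K),
              ‖ftSigmaSq σ ((k₁ + k₂ + τ) • xhat)‖ ^ 2)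
            ≤ 2 * ∫ s in (2:ℝ)..5, ‖ftSigmaSq σ ((K * s) • xhat)‖ ^ 2 ∧
          (2 * ∫ s in (2:ℝ)..5, ‖ftSigmaSq σ ((K * s) • xhat)‖ ^ 2)
            ≤ C * K ^ (-(1 : ℝ)/2) := by
  obtain ⟨M, hM⟩ := hσbdd
  obtain ⟨r, hr⟩ := hD.subset_closedBall 0
  set R := max r 0 with hRdef
  have hR0 : (0:ℝ) ≤ R := le_max_right _ _
  have hsupp : Function.support σ ⊆ Metric.closedBall 0 R :=
    fun y hy => Metric.closedBall_subset_closedBall (le_max_left _ _) (hr (hσsupp hy))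
  set V := (volume (Metric.closedBall (0 : EuclideanSpace ℝ (Fin 3)) R)).toReal with hVdef
  set A := M^4 * (24 * R^2 * V + 2 * V^2) with hAdef
  have hV0 : (0:ℝ) ≤ V := ENNReal.toReal_nonneg
  have hA0 : (0:ℝ) ≤ A := by
    have h1 : (0:ℝ) ≤ 24 * R^2 * V := mul_nonneg (by positivity) hV0
    have h2 : (0:ℝ) ≤ 2 * V^2 := by positivity
    have h3 : (0:ℝ) ≤ M^4 := by positivity
    rw [hAdef]
    nlinarith
  refine ⟨2*A + 1, by linarith, ?_⟩
  intro τ hτ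
  refine ⟨τ + 1, by linarith, ?_⟩
  intro xhat hx K hK
  have hK1 : (1:ℝ) ≤ K := by linarith
  have hτK : τ ≤ K := by linarith
  have hcont := ft_cont hσmeas hM hsupp xhat
  constructor
  · exact stepA hcont (fun u => by positivity) hK1 hτ hτK
  · have h2 := stepB hσmeas hM hR0 hsupp xhat hx hK1
    rw [← hVdef, ← hAdef] at h2
    have hKpos : 0 < K ^ (-(1:ℝ)/2) := Real.rpow_pos_of_pos (by linarith) _
    calc 2 * ∫ s in (2:ℝ)..5, ‖ftSigmaSq σ ((K * s) • xhat)‖ ^ 2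
        ≤ 2 * (A * K ^ (-(1:ℝ)/2)) := by linarith
      _ ≤ (2*A + 1) * K ^ (-(1:ℝ)/2) := by nlinarith
end

section
/- Let p ∈ ℝ³ with p ≠ 0, and let e ∈ S² be a unit vector perpendicular to p. For k > |p|/2, define x̂ = √(1 − |p|²/(4k²))·e + p/(2k), d₁ = √(1 − |p|²/(4k²))·e − p/(2k), d₂ = p/|p|. Then x̂, d₁, d₂ ∈ S², k·(x̂ − d₁) = p, and |k·(x̂ − d₂)| → ∞ as k → ∞. -/
/-!
Since `e ⊥ p` and `‖e‖ = 1`, the vector `a • e + b • p` has squared norm `a² + b² ‖p‖²`, and the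
coefficients `√(1 - ‖p‖²/(4k²))` and `±1/(2k)` are chosen to make this `1`. The `e`-component of
`k • (x̂ - d₂)` is `k √(1 - ‖p‖²/(4k²))`, which tends to infinity because the square root tends to `1`.
-/

open Filter Topology
open scoped RealInnerProductSpace

lemma sqrt_one_sub_div_sq_add_div_sq {r k : ℝ} (hr : 0 ≤ r) (hk : r / 2 < k) :
    Real.sqrt (1 - r ^ 2 / (4 * k ^ 2)) ^ 2 + (1 / (2 * k)) ^ 2 * r ^ 2 = 1 := by
  have hk₀ : 0 < k := by linarith
  have hrk : r ^ 2 / (4 * k ^ 2) ≤ 1 := by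
    rw [div_le_one (by positivity)]
    nlinarith
  rw [Real.sq_sqrt (sub_nonneg.mpr hrk)]
  field_simp
  ring

lemma tendsto_sqrt_one_sub_div_sq (r : ℝ) :
    Tendsto (fun k : ℝ => Real.sqrt (1 - r ^ 2 / (4 * k ^ 2))) atTop (𝓝 1) := by
  have h4k2 : Tendsto (fun k : ℝ => 4 * k ^ 2) atTop atTop :=
    (tendsto_pow_atTop two_ne_zero).const_mul_atTop four_pos
  have h := ((tendsto_const_nhds (x := 1)).sub
    ((tendsto_const_nhds (x := r ^ 2)).div_atTop h4k2)).sqrt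
  simpa using h

lemma smul_add_sub_sub_smul_one_div_two_mul {E : Type*} [AddCommGroup E] [Module ℝ E]
    {k : ℝ} (hk : k ≠ 0) (x p : E) :
    k • ((x + (1 / (2 * k)) • p) - (x - (1 / (2 * k)) • p)) = p := by
  rw [add_sub_sub_cancel, ← two_smul ℝ, smul_smul, smul_smul]
  field_simp
  rw [one_smul]

section Orthonormal

variable {E : Type*} [NormedAddCommGroup E] [InnerProductSpace ℝ E] {e p : E}

lemma norm_smul_add_smul_sq (he : ‖e‖ = 1) (hpe : ⟪e, p⟫ = 0) (a b : ℝ) :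
    ‖a • e + b • p‖ ^ 2 = a ^ 2 + b ^ 2 * ‖p‖ ^ 2 := by
  have hperp : ⟪a • e, b • p⟫ = 0 := by
    rw [real_inner_smul_left, real_inner_smul_right, hpe, mul_zero, mul_zero]
  rw [sq, norm_add_sq_eq_norm_sq_add_norm_sq_real hperp, norm_smul, norm_smul, he]
  simp only [Real.norm_eq_abs, mul_one, ← sq, mul_pow, sq_abs]

lemma norm_smul_add_smul_eq_one (he : ‖e‖ = 1) (hpe : ⟪e, p⟫ = 0) {a b : ℝ}
    (hab : a ^ 2 + b ^ 2 * ‖p‖ ^ 2 = 1) : ‖a • e + b • p‖ = 1 := by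
  rw [← pow_eq_one_iff_of_nonneg (norm_nonneg _) two_ne_zero, norm_smul_add_smul_sq he hpe, hab]

lemma inner_smul_smul_add_smul_sub_smul (he : ‖e‖ = 1) (hpe : ⟪e, p⟫ = 0) (k a b c : ℝ) :
    ⟪e, k • ((a • e + b • p) - c • p)⟫ = k * a := by
  simp only [inner_smul_right, inner_sub_right, inner_add_right, real_inner_self_eq_norm_sq, he,
    hpe]
  ring

lemma tendsto_norm_atTop_of_tendsto_inner (he : ‖e‖ = 1) {α : Type*} {l : Filter α} {v : α → E}
    (hv : Tendsto (fun i => ⟪e, v i⟫) l atTop) : Tendsto (fun i => ‖v i‖) l atTop :=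
  tendsto_atTop_mono (fun i => by simpa [he] using real_inner_le_norm e (v i)) hv

end Orthonormal

/-- Construction of scattering directions: for `p ≠ 0` and a unit vector `e ⊥ p`,
the vectors `x̂ = √(1-|p|²/(4k²)) e + p/(2k)`, `d₁ = √(1-|p|²/(4k²)) e - p/(2k)`,
`d₂ = p/|p|` are unit vectors, `k(x̂ - d₁) = p`, and `|k(x̂ - d₂)| → ∞` as `k → ∞`. -/
theorem scattering_directions
    (p e : EuclideanSpace ℝ (Fin 3)) (hp : p ≠ 0) (he : ‖e‖ = 1)
    (hpe : (⟪e, p⟫ : ℝ) = 0) :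
    (∀ k : ℝ, ‖p‖ / 2 < k →
      ‖Real.sqrt (1 - ‖p‖ ^ 2 / (4 * k ^ 2)) • e + (1 / (2 * k)) • p‖ = 1 ∧
      ‖Real.sqrt (1 - ‖p‖ ^ 2 / (4 * k ^ 2)) • e - (1 / (2 * k)) • p‖ = 1 ∧
      ‖(‖p‖⁻¹ • p)‖ = 1 ∧
      k • ((Real.sqrt (1 - ‖p‖ ^ 2 / (4 * k ^ 2)) • e + (1 / (2 * k)) • p) -
           (Real.sqrt (1 - ‖p‖ ^ 2 / (4 * k ^ 2)) • e - (1 / (2 * k)) • p)) = p) ∧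
    Tendsto (fun k : ℝ =>
        ‖k • ((Real.sqrt (1 - ‖p‖ ^ 2 / (4 * k ^ 2)) • e + (1 / (2 * k)) • p) -
              ‖p‖⁻¹ • p)‖) atTop atTop := by
  refine ⟨fun k hk => ?_, ?_⟩
  · have hunit := sqrt_one_sub_div_sq_add_div_sq (norm_nonneg p) hk
    have hk₀ : k ≠ 0 := (lt_of_le_of_lt (by positivity) hk).ne'
    refine ⟨norm_smul_add_smul_eq_one he hpe hunit, ?_, norm_smul_inv_norm hp,
      smul_add_sub_sub_smul_one_div_two_mul hk₀ _ p⟩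
    rw [sub_eq_add_neg, ← neg_smul]
    exact norm_smul_add_smul_eq_one he hpe (by rwa [neg_sq])
  · apply tendsto_norm_atTop_of_tendsto_inner he
    simp only [inner_smul_smul_add_smul_sub_smul he hpe]
    exact tendsto_id.atTop_mul_pos one_pos (tendsto_sqrt_one_sub_div_sq ‖p‖)
end
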